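/- Let n be a positive integer not divisible by 8, and let (ρ₁, λ₁) and (ρ₂, λ₂) be two ℤ-linear pique structures on the cyclic group ℤ/n (so ρᵢ, λᵢ are automorphisms of ℤ/n, given by multiplication by units). If the two piques have the same permutation character, i.e., for every element w of the free group ⟨R, L⟩ on two generators the permutations w^{α₁} and w^{α₂} of ℤ/n have equal numbers of fixed points (αᵢ : R ↦ ρᵢ, L ↦ λᵢ), then the piques are permutationally similar: there exists a permutation π of the set ℤ/n with π(ρ₁(x)) = ρ₂(π(x)) and π(λ₁(x)) = λ₂(π(x)) for all x. -/

import Mathlib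

/-- Two faithful-up-to-`N` actions (all point stabilizers equal to `N`) of a group on finite
sets of equal cardinality are isomorphic. -/
private lemma lemB {G : Type*} {X : Type u} [Group G]
    (α : G →* Equiv.Perm X) (N : Subgroup G)
    (hX : ∀ (g : G) (x : X), α g x = x ↔ g ∈ N) :
    ∃ (Q : Type u) (e : X ≃ Q × (G ⧸ N)),
      ∀ (g : G) (x : X), e (α g x) = ((e x).1, g • (e x).2) := by
  have hcongr : ∀ (g h : G) (x : X), (g : G ⧸ N) = (h : G ⧸ N) → α g x = α h x := by
    intro g h x hgh
    have hm : g⁻¹ * h ∈ N := (QuotientGroup.eq).mp hgh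
    have h2 : α (g⁻¹ * h) x = x := (hX _ x).mpr hm
    calc α g x = α g (α (g⁻¹ * h) x) := by rw [h2]
      _ = α (g * (g⁻¹ * h)) x := by rw [map_mul α g (g⁻¹ * h)]; rfl
      _ = α h x := by rw [mul_inv_cancel_left]
  have key : ∀ (g h : G) (x : X), α g x = α h x → (g : G ⧸ N) = (h : G ⧸ N) := by
    intro g h x hgh
    rw [QuotientGroup.eq]
    rw [← hX (g⁻¹ * h) x, map_mul]
    show α g⁻¹ (α h x) = x
    rw [← hgh, map_inv]
    exact Equiv.symm_apply_apply _ _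
  let sX : Setoid X := ⟨fun a b => ∃ g : G, α g a = b,
    ⟨fun a => ⟨1, by simp⟩,
     fun {a b} h => by
       obtain ⟨g, hg⟩ := h
       exact ⟨g⁻¹, by rw [← hg, map_inv]; exact Equiv.symm_apply_apply _ _⟩,
     fun {a b c} h1 h2 => by
       obtain ⟨g, hg⟩ := h1; obtain ⟨h, hh⟩ := h2
       exact ⟨h * g, by rw [map_mul]; show α h (α g a) = c; rw [hg, hh]⟩⟩⟩
  have hrel : ∀ x : X, ∃ g : G, α g (Quotient.out (Quotient.mk sX x)) = x :=
    fun x => Quotient.exact (Quotient.out_eq (Quotient.mk sX x))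
  choose gg hgg using hrel
  have hmkout : ∀ c : G ⧸ N, ((Quotient.out c : G) : G ⧸ N) = c := fun c => Quotient.out_eq c
  refine ⟨Quotient sX,
    ⟨fun x => (Quotient.mk sX x, ((gg x : G) : G ⧸ N)),
     fun p => α (Quotient.out p.2) (Quotient.out p.1), ?_, ?_⟩, ?_⟩
  · intro x
    show α (Quotient.out ((gg x : G ⧸ N))) (Quotient.out (Quotient.mk sX x)) = x
    exact (hcongr _ _ _ (hmkout _)).trans (hgg x)
  · rintro ⟨q, c⟩
    have hq : Quotient.mk sX (α (Quotient.out c) (Quotient.out q)) = q := by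
      refine ((Quotient.sound ?_).symm).trans (Quotient.out_eq q)
      exact ⟨Quotient.out c, rfl⟩
    have hc : ((gg (α (Quotient.out c) (Quotient.out q)) : G) : G ⧸ N) = c := by
      have h1 := hgg (α (Quotient.out c) (Quotient.out q))
      rw [hq] at h1
      exact (key _ _ _ h1).trans (hmkout c)
    exact Prod.ext_iff.mpr (And.intro hq hc)
  · intro g x
    have hq : Quotient.mk sX (α g x) = Quotient.mk sX x := by
      refine (Quotient.sound ?_).symm
      exact ⟨g, rfl⟩
    have hc : ((gg (α g x) : G) : G ⧸ N) = g • ((gg x : G) : G ⧸ N) := by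
      have h1 := hgg (α g x)
      rw [hq] at h1
      have h2 : α (g * gg x) (Quotient.out (Quotient.mk sX x)) = α g x := by
        rw [map_mul]
        show α g (α (gg x) _) = α g x
        rw [hgg x]
      have := key _ _ _ (h1.trans h2.symm)
      rw [this, MulAction.Quotient.smul_coe, smul_eq_mul]
    exact Prod.ext_iff.mpr (And.intro hq hc)

private lemma lemA {G : Type*} {X Y : Type} [Group G] [Finite X] [Finite Y]
    (α : G →* Equiv.Perm X) (β : G →* Equiv.Perm Y) (N : Subgroup G)
    (hX : ∀ (g : G) (x : X), α g x = x ↔ g ∈ N)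
    (hY : ∀ (g : G) (y : Y), β g y = y ↔ g ∈ N)
    (hcard : Nat.card X = Nat.card Y) :
    ∃ e : X ≃ Y, ∀ (g : G) (x : X), e (α g x) = β g (e x) := by
  rcases isEmpty_or_nonempty X with hXe | hXne
  · have h0 : Nat.card Y = 0 := by
      rw [← hcard]; exact Nat.card_of_isEmpty
    have hYe : IsEmpty Y := by
      rcases Nat.card_eq_zero.mp h0 with h | h
      · exact h
      · exact absurd ‹Finite Y› h.not_finite
    exact ⟨Equiv.equivOfIsEmpty X Y, fun g x => (hXe.false x).elim⟩
  obtain ⟨QX, eX, hEX⟩ := lemB α N hX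
  obtain ⟨QY, eY, hEY⟩ := lemB β N hY
  haveI hQXf : Finite (QX × (G ⧸ N)) := Finite.of_equiv _ eX
  have hne : Nonempty (QX × (G ⧸ N)) := Nonempty.map eX hXne
  haveI : Nonempty QX := ⟨hne.some.1⟩
  haveI : Nonempty (G ⧸ N) := ⟨hne.some.2⟩
  haveI : Finite QX := Finite.prod_left (G ⧸ N)
  haveI : Finite (G ⧸ N) := Finite.prod_right QX
  have hYne : Nonempty Y := by
    by_contra h
    have : Nat.card Y = 0 := @Nat.card_of_isEmpty _ (not_nonempty_iff.mp h)
    rw [this] at hcard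
    exact (Nat.card_pos (α := X)).ne' hcard
  haveI : Finite QY := by
    haveI : Finite (QY × (G ⧸ N)) := Finite.of_equiv _ eY
    exact Finite.prod_left (G ⧸ N)
  have hcQ : Nat.card QX = Nat.card QY := by
    have h1 : Nat.card X = Nat.card QX * Nat.card (G ⧸ N) := by
      rw [Nat.card_congr eX, Nat.card_prod]
    have h2 : Nat.card Y = Nat.card QY * Nat.card (G ⧸ N) := by
      rw [Nat.card_congr eY, Nat.card_prod]
    have hk : 0 < Nat.card (G ⧸ N) := Nat.card_pos
    exact Nat.eq_of_mul_eq_mul_right hk (by rw [← h1, ← h2, hcard])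
  haveI := Fintype.ofFinite QX
  haveI := Fintype.ofFinite QY
  have qe : QX ≃ QY := Fintype.equivOfCardEq (by
    rw [← Nat.card_eq_fintype_card, ← Nat.card_eq_fintype_card]; exact hcQ)
  refine ⟨eX.trans ((qe.prodCongr (Equiv.refl (G ⧸ N))).trans eY.symm), ?_⟩
  intro g x
  have hY' : ∀ (p : QY × (G ⧸ N)), β g (eY.symm p) = eY.symm (p.1, g • p.2) := by
    intro p
    apply eY.injective
    rw [Equiv.apply_symm_apply, hEY g (eY.symm p), Equiv.apply_symm_apply]
  show eY.symm ((qe.prodCongr (Equiv.refl (G ⧸ N))) (eX (α g x)))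
      = β g (eY.symm ((qe.prodCongr (Equiv.refl (G ⧸ N))) (eX x)))
  rw [hEX g x, hY' ((qe.prodCongr (Equiv.refl (G ⧸ N))) (eX x))]
  rfl

private lemma ordmul {n : ℕ} (u : (ZMod n)ˣ) (x : ZMod n) :
    addOrderOf ((u : ZMod n) * x) = addOrderOf x := by
  rw [addOrderOf_eq_addOrderOf_iff]
  intro m
  rw [← mul_smul_comm, Units.mul_right_eq_zero]

private def actPerm {n : ℕ} (u : (ZMod n)ˣ) (d : ℕ) :
    Equiv.Perm {x : ZMod n // addOrderOf x = d} where
  toFun x := ⟨(u : ZMod n) * x, by rw [ordmul]; exact x.2⟩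
  invFun x := ⟨((u⁻¹ : (ZMod n)ˣ) : ZMod n) * x, by rw [ordmul]; exact x.2⟩
  left_inv x := Subtype.ext (by simp)
  right_inv x := Subtype.ext (by simp)

private def actHom {n : ℕ} {G : Type*} [Group G] (χ : G →* (ZMod n)ˣ) (d : ℕ) :
    G →* Equiv.Perm {x : ZMod n // addOrderOf x = d} where
  toFun w := actPerm (χ w) d
  map_one' := by
    ext x
    show ((χ 1 : (ZMod n)ˣ) : ZMod n) * (x : ZMod n) = (x : ZMod n)
    rw [map_one, Units.val_one, one_mul]
  map_mul' w₁ w₂ := by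
    ext x
    show ((χ (w₁ * w₂) : (ZMod n)ˣ) : ZMod n) * (x : ZMod n)
        = ((χ w₁ : (ZMod n)ˣ) : ZMod n) * (((χ w₂ : (ZMod n)ˣ) : ZMod n) * (x : ZMod n))
    rw [map_mul, Units.val_mul, mul_assoc]

@[simp] private lemma actHom_apply {n : ℕ} {G : Type*} [Group G] (χ : G →* (ZMod n)ˣ)
    (d : ℕ) (w : G) (x : {x : ZMod n // addOrderOf x = d}) :
    (actHom χ d w x : ZMod n) = ((χ w : (ZMod n)ˣ) : ZMod n) * (x : ZMod n) := rfl

/-- The number of solutions of `c * x = 0` in `ZMod n` is `gcd (val c) n`. -/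
private lemma card_ann {n : ℕ} [NeZero n] (c : ZMod n) :
    Nat.card {x : ZMod n // c * x = 0} = Nat.gcd c.val n := by
  have hnz : n ≠ 0 := NeZero.ne n
  set g := Nat.gcd c.val n with hgdef
  have hg : g ∣ n := Nat.gcd_dvd_right _ _
  have hgc : g ∣ c.val := Nat.gcd_dvd_left _ _
  have hgpos : 0 < g := Nat.gcd_pos_of_pos_right _ (Nat.pos_of_ne_zero hnz)
  set k := n / g with hkdef
  have hk : k ∣ n := Nat.div_dvd_of_dvd hg
  have step1 : ∀ x : ZMod n, c * x = 0 ↔ n ∣ c.val * x.val := by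
    intro x
    have hcx : c * x = ((c.val * x.val : ℕ) : ZMod n) := by
      rw [Nat.cast_mul, ZMod.natCast_zmod_val, ZMod.natCast_zmod_val]
    rw [hcx, ZMod.natCast_eq_zero_iff]
  have step2 : ∀ B : ℕ, n ∣ c.val * B ↔ k ∣ B := by
    intro B
    constructor
    · rintro ⟨t, ht⟩
      have hco : Nat.Coprime k (c.val / g) :=
        (Nat.coprime_div_gcd_div_gcd hgpos).symm
      apply hco.dvd_of_dvd_mul_left
      have h1 : g * ((c.val / g) * B) = g * (k * t) := by
        rw [← mul_assoc, Nat.mul_div_cancel' hgc, ht, ← Nat.mul_div_cancel' hg]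
        ring
      exact ⟨t, Nat.eq_of_mul_eq_mul_left hgpos h1⟩
    · rintro ⟨t, ht⟩
      refine ⟨(c.val / g) * t, ?_⟩
      rw [ht]
      calc c.val * (k * t) = (g * (c.val / g)) * (k * t) := by
            rw [Nat.mul_div_cancel' hgc]
        _ = (g * k) * ((c.val / g) * t) := by ring
        _ = n * ((c.val / g) * t) := by rw [Nat.mul_div_cancel' hg]
  have step3 : ∀ x : ZMod n, k ∣ x.val ↔ x ∈ AddSubgroup.zmultiples ((k : ℕ) : ZMod n) := by
    intro x
    constructor
    · rintro ⟨t, ht⟩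
      refine AddSubgroup.mem_zmultiples_iff.mpr ⟨(t : ℤ), ?_⟩
      have : ((k * t : ℕ) : ZMod n) = x := by rw [← ht, ZMod.natCast_zmod_val]
      rw [← this]
      push_cast
      rw [zsmul_eq_mul]
      push_cast
      ring
    · intro hm
      obtain ⟨m, hm⟩ := AddSubgroup.mem_zmultiples_iff.mp hm
      have hx : x = ((m * (k : ℤ) : ℤ) : ZMod n) := by
        rw [← hm, zsmul_eq_mul]
        push_cast
        ring
      have hval : ((x.val : ℤ)) = (m * (k : ℤ)) % (n : ℤ) := by
        rw [hx]
        exact ZMod.val_intCast _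
      have hdv : (k : ℤ) ∣ ((x.val : ℤ)) := by
        rw [hval, Int.emod_def]
        exact dvd_sub (dvd_mul_left _ _) (Dvd.dvd.mul_right (Int.natCast_dvd_natCast.mpr hk) _)
      exact_mod_cast hdv
  have hiff : ∀ x : ZMod n, c * x = 0 ↔ x ∈ AddSubgroup.zmultiples ((k : ℕ) : ZMod n) :=
    fun x => (step1 x).trans ((step2 x.val).trans (step3 x))
  calc Nat.card {x : ZMod n // c * x = 0}
      = Nat.card (AddSubgroup.zmultiples ((k : ℕ) : ZMod n)) :=
        Nat.card_congr (Equiv.subtypeEquivRight hiff)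
    _ = addOrderOf ((k : ℕ) : ZMod n) := Nat.card_zmultiples _
    _ = n / Nat.gcd n k := ZMod.addOrderOf_coe k hnz
    _ = n / k := by rw [Nat.gcd_eq_right hk]
    _ = g := Nat.div_div_self hg hnz

/-- (Main theorem.) If `n` is a positive integer not divisible by `8`, then any
two ℤ-linear pique structures on `ℤ/n` with the same permutation character are permutationally
similar. -/
theorem stmt7 (n : ℕ) (hn : 0 < n) (h8 : ¬ (8 ∣ n))
    (ρ₁ l₁ ρ₂ l₂ : AddAut (ZMod n))
    (hchar : ∀ w : FreeGroup (Fin 2),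
      Nat.card {x : ZMod n // Multiplicative.toAdd ((FreeGroup.lift ![Multiplicative.ofAdd ρ₁, Multiplicative.ofAdd l₁]) w) x = x} =
        Nat.card {x : ZMod n // Multiplicative.toAdd ((FreeGroup.lift ![Multiplicative.ofAdd ρ₂, Multiplicative.ofAdd l₂]) w) x = x}) :
    ∃ π : Equiv.Perm (ZMod n),
      ∀ x : ZMod n, π (ρ₁ x) = ρ₂ (π x) ∧ π (l₁ x) = l₂ (π x) := by
  haveI hn0 : NeZero n := ⟨hn.ne'⟩
  set Θ : Multiplicative (AddAut (ZMod n)) ≃* (ZMod n)ˣ := (ZMod.AddAutEquivUnits n).toMultiplicative with hΘ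
  have hmul : ∀ (f : AddAut (ZMod n)) (x : ZMod n), f x = ((Θ f : (ZMod n)ˣ) : ZMod n) * x := by
    intro f x
    have : ((Θ f : (ZMod n)ˣ) : ZMod n) = f 1 := rfl
    rw [this, mul_comm, ← x.intCast_zmod_cast, ← zsmul_eq_mul, ← map_zsmul, zsmul_one]
  set χ₁ : FreeGroup (Fin 2) →* (ZMod n)ˣ := FreeGroup.lift ![Θ ρ₁, Θ l₁] with hχ₁
  set χ₂ : FreeGroup (Fin 2) →* (ZMod n)ˣ := FreeGroup.lift ![Θ ρ₂, Θ l₂] with hχ₂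
  have hliftgen : ∀ (ρ l : AddAut (ZMod n)) (w : FreeGroup (Fin 2)),
      Θ (Multiplicative.toAdd ((FreeGroup.lift ![Multiplicative.ofAdd ρ, Multiplicative.ofAdd l]) w)) = (FreeGroup.lift ![Θ ρ, Θ l]) w := by
    intro ρ l w
    have hcomp : (Θ : Multiplicative (AddAut (ZMod n)) →* (ZMod n)ˣ).comp (FreeGroup.lift ![Multiplicative.ofAdd ρ, Multiplicative.ofAdd l])
        = FreeGroup.lift ![Θ ρ, Θ l] := by
      apply FreeGroup.ext_hom
      intro a
      fin_cases a <;> simp <;> rfl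
    exact DFunLike.congr_fun hcomp w
  have hlift : ∀ (ρ l : AddAut (ZMod n)) (w : FreeGroup (Fin 2)) (x : ZMod n),
      Multiplicative.toAdd ((FreeGroup.lift ![Multiplicative.ofAdd ρ, Multiplicative.ofAdd l]) w) x = (((FreeGroup.lift ![Θ ρ, Θ l]) w : (ZMod n)ˣ) : ZMod n) * x := by
    intro ρ l w x
    rw [hmul _ x]
    exact congrArg (fun u : (ZMod n)ˣ => (u : ZMod n) * x) (hliftgen ρ l w)
  have hchar' : ∀ w : FreeGroup (Fin 2),
      Nat.card {x : ZMod n // ((χ₁ w : (ZMod n)ˣ) - 1 : ZMod n) * x = 0} =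
        Nat.card {x : ZMod n // ((χ₂ w : (ZMod n)ˣ) - 1 : ZMod n) * x = 0} := by
    intro w
    have e1 : {x : ZMod n // Multiplicative.toAdd ((FreeGroup.lift ![Multiplicative.ofAdd ρ₁, Multiplicative.ofAdd l₁]) w) x = x}
        ≃ {x : ZMod n // ((χ₁ w : (ZMod n)ˣ) - 1 : ZMod n) * x = 0} :=
      Equiv.subtypeEquivRight (fun x => by
        rw [hlift ρ₁ l₁ w x, ← hχ₁, sub_mul, one_mul, sub_eq_zero])
    have e2 : {x : ZMod n // Multiplicative.toAdd ((FreeGroup.lift ![Multiplicative.ofAdd ρ₂, Multiplicative.ofAdd l₂]) w) x = x}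
        ≃ {x : ZMod n // ((χ₂ w : (ZMod n)ˣ) - 1 : ZMod n) * x = 0} :=
      Equiv.subtypeEquivRight (fun x => by
        rw [hlift ρ₂ l₂ w x, ← hχ₂, sub_mul, one_mul, sub_eq_zero])
    rw [← Nat.card_congr e1, ← Nat.card_congr e2]
    exact hchar w
  have hdvd : ∀ (d : ℕ), d ∣ n → ∀ w : FreeGroup (Fin 2),
      (d ∣ (((χ₁ w : (ZMod n)ˣ) : ZMod n) - 1).val ↔ d ∣ (((χ₂ w : (ZMod n)ˣ) : ZMod n) - 1).val) := by
    intro d hd w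
    have h1 := card_ann (((χ₁ w : (ZMod n)ˣ) : ZMod n) - 1)
    have h2 := card_ann (((χ₂ w : (ZMod n)ˣ) : ZMod n) - 1)
    rw [hchar' w, h2] at h1
    constructor
    · intro h
      exact (h1 ▸ Nat.dvd_gcd h hd).trans (Nat.gcd_dvd_left _ _)
    · intro h
      exact (h1.symm ▸ Nat.dvd_gcd h hd).trans (Nat.gcd_dvd_left _ _)
  have hstab : ∀ (u : (ZMod n)ˣ) (x : ZMod n),
      ((u : ZMod n) * x = x ↔ addOrderOf x ∣ ((u : ZMod n) - 1).val) := by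
    intro u x
    have h1 : (u : ZMod n) * x = x ↔ ((u : ZMod n) - 1) * x = 0 := by
      rw [sub_mul, one_mul, sub_eq_zero]
    rw [h1,
      show ((u : ZMod n) - 1) * x = ((u : ZMod n) - 1).val • x from by
        rw [nsmul_eq_mul, ZMod.natCast_zmod_val]]
    exact (addOrderOf_dvd_iff_nsmul_eq_zero).symm
  -- layer-by-layer similarity
  have layer : ∀ d : ℕ, ∃ e : {x : ZMod n // addOrderOf x = d} ≃ {x : ZMod n // addOrderOf x = d},
      ∀ (w : FreeGroup (Fin 2)) (x : {x : ZMod n // addOrderOf x = d}),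
        e (actHom χ₁ d w x) = actHom χ₂ d w (e x) := by
    intro d
    by_cases hd : d ∣ n
    · haveI : NeZero d := ⟨fun h => by
        subst h
        exact hn.ne' (Nat.eq_zero_of_zero_dvd hd)⟩
      set φ : (ZMod n)ˣ →* (ZMod d)ˣ := Units.map (ZMod.castHom hd (ZMod d)).toMonoidHom with hφ
      have hker : ∀ u : (ZMod n)ˣ, φ u = 1 ↔ d ∣ ((u : ZMod n) - 1).val := by
        intro u
        rw [Units.ext_iff]
        have hval : ((φ u : (ZMod d)ˣ) : ZMod d) = ZMod.castHom hd (ZMod d) (u : ZMod n) := rfl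
        rw [hval, Units.val_one]
        have hsub : (ZMod.castHom hd (ZMod d)) ((u : ZMod n) - 1)
            = (ZMod.castHom hd (ZMod d)) (u : ZMod n) - 1 := by
          rw [map_sub, map_one]
        constructor
        · intro h
          have h0 : (ZMod.castHom hd (ZMod d)) ((u : ZMod n) - 1) = 0 := by
            rw [hsub, h, sub_self]
          rw [ZMod.castHom_apply, ← ZMod.natCast_val, ZMod.natCast_eq_zero_iff] at h0
          exact h0
        · intro h
          have h0 : (ZMod.castHom hd (ZMod d)) ((u : ZMod n) - 1) = 0 := by
            rw [ZMod.castHom_apply, ← ZMod.natCast_val, ZMod.natCast_eq_zero_iff]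
            exact h
          rw [hsub, sub_eq_zero] at h0
          exact h0
      refine lemA (actHom χ₁ d) (actHom χ₂ d) (MonoidHom.ker (φ.comp χ₁)) ?_ ?_ rfl
      · intro w x
        rw [Subtype.ext_iff, actHom_apply, hstab, x.2, ← hker, MonoidHom.mem_ker,
          MonoidHom.comp_apply]
      · intro w x
        rw [Subtype.ext_iff, actHom_apply, hstab, x.2, ← hdvd d hd w, ← hker,
          MonoidHom.mem_ker, MonoidHom.comp_apply]
    · have hempty : IsEmpty {x : ZMod n // addOrderOf x = d} := by
        refine ⟨fun x => hd ?_⟩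
        rw [← x.2]
        have := addOrderOf_dvd_card (x := (x : ZMod n))
        rwa [ZMod.card] at this
      exact ⟨Equiv.refl _, fun w x => (hempty.false x).elim⟩
  choose e he using layer
  -- glue the layers
  set π0 : ZMod n → ZMod n := fun x => ((e (addOrderOf x) ⟨x, rfl⟩ : {y : ZMod n // addOrderOf y = addOrderOf x}) : ZMod n) with hπ0
  have aux : ∀ (x : ZMod n) (d : ℕ) (h : addOrderOf x = d),
      π0 x = ((e d ⟨x, h⟩ : {y : ZMod n // addOrderOf y = d}) : ZMod n) := by
    intro x d h
    subst h
    rfl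
  have hord : ∀ x : ZMod n, addOrderOf (π0 x) = addOrderOf x := fun x =>
    (e (addOrderOf x) ⟨x, rfl⟩).2
  have hinj : Function.Injective π0 := by
    intro x y hxy
    have hd : addOrderOf y = addOrderOf x := by
      rw [← hord x, ← hord y, hxy]
    have h1 := aux y (addOrderOf x) hd
    rw [h1, aux x (addOrderOf x) rfl] at hxy
    have h2 := (e (addOrderOf x)).injective (Subtype.ext hxy)
    exact congrArg Subtype.val h2
  have hbij : Function.Bijective π0 := (Finite.injective_iff_bijective).mp hinj
  refine ⟨Equiv.ofBijective π0 hbij, ?_⟩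
  have hgen : ∀ (i : Fin 2) (ρ ρ' : AddAut (ZMod n)) (hgen1 : χ₁ (FreeGroup.of i) = Θ ρ)
      (hgen2 : χ₂ (FreeGroup.of i) = Θ ρ') (x : ZMod n), π0 (ρ x) = ρ' (π0 x) := by
    intro i ρ ρ' hg1 hg2 x
    set d := addOrderOf x with hdd
    have hx1 : ρ x = ((χ₁ (FreeGroup.of i) : (ZMod n)ˣ) : ZMod n) * x := by
      rw [hg1, hmul]
    have hordx : addOrderOf (ρ x) = d := by
      rw [hx1]; exact ordmul _ _
    have hsub : (⟨ρ x, hordx⟩ : {y : ZMod n // addOrderOf y = d})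
        = actHom χ₁ d (FreeGroup.of i) ⟨x, rfl⟩ := by
      apply Subtype.ext
      rw [actHom_apply]
      exact hx1
    rw [aux (ρ x) d hordx, hsub, he d (FreeGroup.of i) ⟨x, rfl⟩]
    have : ρ' (π0 x) = ((χ₂ (FreeGroup.of i) : (ZMod n)ˣ) : ZMod n) * π0 x := by
      rw [hg2, hmul]
    rw [this, actHom_apply]
  intro x
  constructor
  · exact hgen 0 ρ₁ ρ₂ (by simp [hχ₁]) (by simp [hχ₂]) x
  · exact hgen 1 l₁ l₂ (by simp [hχ₁]) (by simp [hχ₂]) x
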